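/- arXiv:math/0701055 — 2 statements merged into one kernel-verified Lean document; each statement's English description precedes it below -/
import Mathlib

section
/- For every n ≥ 0, every q ∈ ℤ, and all nonzero z, w ∈ ℂ with z ≠ w, setting F_n(z,w) = −i·{A_n^*(z), B_n(w)}, one has z^q·F_n(z,w) − w^q·F_n(w,z) = Q_q(z,w)·(A_n^*(z)·B_n(w) − A_n^*(w)·B_n(z)). -/
open Complex

/-- Derivative of `f` in the direction of the real part of the `k`-th variable α_k. -/
noncomputable def duDeriv (k : ℕ) (f : (ℕ → ℂ) → ℂ) (a : ℕ → ℂ) : ℂ :=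
  deriv (fun t : ℝ => f (Function.update a k (a k + (t : ℂ)))) 0

/-- Derivative of `f` in the direction of the imaginary part of the `k`-th variable α_k. -/
noncomputable def dvDeriv (k : ℕ) (f : (ℕ → ℂ) → ℂ) (a : ℕ → ℂ) : ℂ :=
  deriv (fun t : ℝ => f (Function.update a k (a k + (t : ℂ) * Complex.I))) 0

/-- Wirtinger derivative ∂f/∂α_k = (1/2)(∂/∂u_k − i·∂/∂v_k). -/
noncomputable def dAlpha (k : ℕ) (f : (ℕ → ℂ) → ℂ) (a : ℕ → ℂ) : ℂ :=
  (1 / 2) * (duDeriv k f a - Complex.I * dvDeriv k f a)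

/-- Wirtinger derivative ∂f/∂conj(α_k) = (1/2)(∂/∂u_k + i·∂/∂v_k). -/
noncomputable def dAlphaBar (k : ℕ) (f : (ℕ → ℂ) → ℂ) (a : ℕ → ℂ) : ℂ :=
  (1 / 2) * (duDeriv k f a + Complex.I * dvDeriv k f a)

/-- The Poisson bracket
{f,g} = i·Σ_k (1 − |α_k|²)·[(∂f/∂conj(α_k))·(∂g/∂α_k) − (∂f/∂α_k)·(∂g/∂conj(α_k))]. -/
noncomputable def pb (f g : (ℕ → ℂ) → ℂ) (a : ℕ → ℂ) : ℂ :=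
  Complex.I * ∑' k : ℕ, (1 - (Complex.normSq (a k) : ℂ)) *
    (dAlphaBar k f a * dAlpha k g a - dAlpha k f a * dAlphaBar k g a)

/-- The quadruple ((A_n(z), B_n(z)), (A_n^*(z), B_n^*(z))) of Wall polynomials:
A_0(z) = α_0, B_0(z) = 1, A_0^*(z) = conj(α_0), B_0^*(z) = 1,
A_{n+1}(z) = A_n(z) + α_{n+1}·z·B_n^*(z), B_{n+1}(z) = B_n(z) + α_{n+1}·z·A_n^*(z),
A_{n+1}^*(z) = z·A_n^*(z) + conj(α_{n+1})·B_n(z),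
B_{n+1}^*(z) = z·B_n^*(z) + conj(α_{n+1})·A_n(z). -/
noncomputable def WallP : ℕ → ℂ → (ℕ → ℂ) → (ℂ × ℂ) × ℂ × ℂ
  | 0, _, a => ((a 0, 1), (starRingEnd ℂ) (a 0), 1)
  | n + 1, z, a =>
      (((WallP n z a).1.1 + a (n + 1) * z * (WallP n z a).2.2,
        (WallP n z a).1.2 + a (n + 1) * z * (WallP n z a).2.1),
       z * (WallP n z a).2.1 + (starRingEnd ℂ) (a (n + 1)) * (WallP n z a).1.2,
       z * (WallP n z a).2.2 + (starRingEnd ℂ) (a (n + 1)) * (WallP n z a).1.1)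

/-- The Wall polynomial A_n(z). -/
noncomputable def WallA (n : ℕ) (z : ℂ) (a : ℕ → ℂ) : ℂ := (WallP n z a).1.1

/-- The Wall polynomial B_n(z). -/
noncomputable def WallB (n : ℕ) (z : ℂ) (a : ℕ → ℂ) : ℂ := (WallP n z a).1.2

/-- The reversed Wall polynomial A_n^*(z). -/
noncomputable def WallAStar (n : ℕ) (z : ℂ) (a : ℕ → ℂ) : ℂ := (WallP n z a).2.1

/-- The reversed Wall polynomial B_n^*(z). -/
noncomputable def WallBStar (n : ℕ) (z : ℂ) (a : ℕ → ℂ) : ℂ := (WallP n z a).2.2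

/-- Q_q(z,w) = z·w·(z^{q−1} − w^{q−1})/(z − w). -/
noncomputable def Qpow (q : ℤ) (z w : ℂ) : ℂ := z * w * (z ^ (q - 1) - w ^ (q - 1)) / (z - w)

/-! ### Auxiliary Wirtinger calculus -/

/-- `f` has Wirtinger derivatives `p = ∂f/∂α_k` and `q = ∂f/∂conj(α_k)` at `a`. -/
def Wirt (k : ℕ) (a : ℕ → ℂ) (f : (ℕ → ℂ) → ℂ) (p q : ℂ) : Prop :=
  HasDerivAt (fun t : ℝ => f (Function.update a k (a k + (t : ℂ)))) (p + q) 0 ∧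
  HasDerivAt (fun t : ℝ => f (Function.update a k (a k + (t : ℂ) * Complex.I)))
    (Complex.I * (p - q)) 0

lemma Wirt.dAlpha_eq {k : ℕ} {a : ℕ → ℂ} {f : (ℕ → ℂ) → ℂ} {p q : ℂ}
    (h : Wirt k a f p q) : dAlpha k f a = p := by
  unfold dAlpha duDeriv dvDeriv
  rw [h.1.deriv, h.2.deriv, ← mul_assoc, Complex.I_mul_I]
  ring

lemma Wirt.dAlphaBar_eq {k : ℕ} {a : ℕ → ℂ} {f : (ℕ → ℂ) → ℂ} {p q : ℂ}
    (h : Wirt k a f p q) : dAlphaBar k f a = q := by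
  unfold dAlphaBar duDeriv dvDeriv
  rw [h.1.deriv, h.2.deriv, ← mul_assoc, Complex.I_mul_I]
  ring

lemma Wirt.congr {k : ℕ} {a : ℕ → ℂ} {f g : (ℕ → ℂ) → ℂ} {p q p' q' : ℂ}
    (h : Wirt k a f p q) (hf : f = g) (hp : p = p') (hq : q = q') : Wirt k a g p' q' := by
  subst hf; subst hp; subst hq; exact h

lemma wirt_const (k : ℕ) (a : ℕ → ℂ) (c : ℂ) : Wirt k a (fun _ => c) 0 0 := by
  constructor
  · simpa using hasDerivAt_const (0 : ℝ) c
  · simpa using hasDerivAt_const (0 : ℝ) c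

lemma hasDerivAt_ofReal' (x : ℝ) : HasDerivAt (fun t : ℝ => (t : ℂ)) 1 x := by
  exact (Complex.ofRealCLM.hasDerivAt (x := x)).congr_deriv (by simp)

lemma wirt_coord (k j : ℕ) (a : ℕ → ℂ) :
    Wirt k a (fun x => x j) (if k = j then 1 else 0) 0 := by
  by_cases h : k = j
  · subst h
    constructor
    · have he : (fun t : ℝ => (Function.update a k (a k + (t : ℂ))) k)
          = fun t : ℝ => a k + (t : ℂ) := by funext t; simp
      rw [he, if_pos rfl]
      exact ((hasDerivAt_const (0 : ℝ) (a k)).add (hasDerivAt_ofReal' 0)).congr_deriv (by ring)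
    · have he : (fun t : ℝ => (Function.update a k (a k + (t : ℂ) * Complex.I)) k)
          = fun t : ℝ => a k + (t : ℂ) * Complex.I := by funext t; simp
      rw [he, if_pos rfl]
      have := (hasDerivAt_const (0 : ℝ) (a k)).add ((hasDerivAt_ofReal' 0).mul_const Complex.I)
      exact this.congr_deriv (by ring)
  · have he1 : (fun t : ℝ => (Function.update a k (a k + (t : ℂ))) j) = fun _ : ℝ => a j := by
      funext t; simp [Function.update_of_ne (Ne.symm h)]
    have he2 : (fun t : ℝ => (Function.update a k (a k + (t : ℂ) * Complex.I)) j)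
        = fun _ : ℝ => a j := by
      funext t; simp [Function.update_of_ne (Ne.symm h)]
    constructor
    · rw [he1, if_neg h]; simpa using hasDerivAt_const (0 : ℝ) (a j)
    · rw [he2, if_neg h]; simpa using hasDerivAt_const (0 : ℝ) (a j)

lemma wirt_conj (k j : ℕ) (a : ℕ → ℂ) :
    Wirt k a (fun x => (starRingEnd ℂ) (x j)) 0 (if k = j then 1 else 0) := by
  by_cases h : k = j
  · subst h
    constructor
    · have he : (fun t : ℝ => (starRingEnd ℂ) ((Function.update a k (a k + (t : ℂ))) k))
          = fun t : ℝ => (starRingEnd ℂ) (a k) + (t : ℂ) := by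
        funext t; simp [Complex.conj_ofReal]
      rw [he, if_pos rfl]
      exact ((hasDerivAt_const (0 : ℝ) ((starRingEnd ℂ) (a k))).add (hasDerivAt_ofReal' 0)).congr_deriv (by ring)
    · have he : (fun t : ℝ =>
            (starRingEnd ℂ) ((Function.update a k (a k + (t : ℂ) * Complex.I)) k))
          = fun t : ℝ => (starRingEnd ℂ) (a k) + (t : ℂ) * (-Complex.I) := by
        funext t; simp [Complex.conj_ofReal, Complex.conj_I, mul_neg]
      rw [he, if_pos rfl]
      have := (hasDerivAt_const (0 : ℝ) ((starRingEnd ℂ) (a k))).add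
        ((hasDerivAt_ofReal' 0).mul_const (-Complex.I))
      exact this.congr_deriv (by ring)
  · have he1 : (fun t : ℝ => (starRingEnd ℂ) ((Function.update a k (a k + (t : ℂ))) j))
        = fun _ : ℝ => (starRingEnd ℂ) (a j) := by
      funext t; simp [Function.update_of_ne (Ne.symm h)]
    have he2 : (fun t : ℝ =>
          (starRingEnd ℂ) ((Function.update a k (a k + (t : ℂ) * Complex.I)) j))
        = fun _ : ℝ => (starRingEnd ℂ) (a j) := by
      funext t; simp [Function.update_of_ne (Ne.symm h)]
    constructor
    · rw [he1, if_neg h]; simpa using hasDerivAt_const (0 : ℝ) ((starRingEnd ℂ) (a j))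
    · rw [he2, if_neg h]; simpa using hasDerivAt_const (0 : ℝ) ((starRingEnd ℂ) (a j))

lemma Wirt.add {k : ℕ} {a : ℕ → ℂ} {f g : (ℕ → ℂ) → ℂ} {p q p' q' : ℂ}
    (hf : Wirt k a f p q) (hg : Wirt k a g p' q') :
    Wirt k a (fun x => f x + g x) (p + p') (q + q') := by
  constructor
  · have := hf.1.add hg.1
    exact this.congr_deriv (by ring)
  · have := hf.2.add hg.2
    exact this.congr_deriv (by ring)

lemma update_zero_eq (k : ℕ) (a : ℕ → ℂ) :
    Function.update a k (a k + ((0 : ℝ) : ℂ)) = a := by simp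

lemma update_zero_eq' (k : ℕ) (a : ℕ → ℂ) :
    Function.update a k (a k + ((0 : ℝ) : ℂ) * Complex.I) = a := by simp

lemma Wirt.mul {k : ℕ} {a : ℕ → ℂ} {f g : (ℕ → ℂ) → ℂ} {p q p' q' : ℂ}
    (hf : Wirt k a f p q) (hg : Wirt k a g p' q') :
    Wirt k a (fun x => f x * g x) (p * g a + f a * p') (q * g a + f a * q') := by
  constructor
  · have := hf.1.mul hg.1
    rw [update_zero_eq k a] at this
    exact this.congr_deriv (by ring)
  · have := hf.2.mul hg.2
    rw [update_zero_eq' k a] at this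
    exact this.congr_deriv (by ring)

/-! ### Derivatives of the Wall polynomials A*_n, B_n -/

/-- `((∂A*_n(z)/∂α_k, ∂A*_n(z)/∂ᾱ_k), ∂B_n(z)/∂α_k, ∂B_n(z)/∂ᾱ_k)` -/
noncomputable def dW : ℕ → ℂ → (ℕ → ℂ) → ℕ → (ℂ × ℂ) × ℂ × ℂ
  | 0, _, _, k => ((0, if k = 0 then 1 else 0), 0, 0)
  | n + 1, z, a, k =>
      ((z * (dW n z a k).1.1 + (starRingEnd ℂ) (a (n + 1)) * (dW n z a k).2.1,
        z * (dW n z a k).1.2 + (starRingEnd ℂ) (a (n + 1)) * (dW n z a k).2.2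
          + (if k = n + 1 then WallB n z a else 0)),
       (dW n z a k).2.1 + a (n + 1) * z * (dW n z a k).1.1
          + (if k = n + 1 then z * WallAStar n z a else 0),
       (dW n z a k).2.2 + a (n + 1) * z * (dW n z a k).1.2)

lemma dW_vanish (n : ℕ) (z : ℂ) (a : ℕ → ℂ) : ∀ k, n < k → dW n z a k = ((0, 0), 0, 0) := by
  induction n with
  | zero => intro k hk; simp [dW, hk.ne']
  | succ n IH =>
      intro k hk
      have h1 : n < k := by omega
      have h2 : k ≠ n + 1 := by omega
      simp [dW, IH k h1, h2]

lemma wall_wirt (z : ℂ) (a : ℕ → ℂ) (n k : ℕ) :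
    Wirt k a (WallAStar n z) (dW n z a k).1.1 (dW n z a k).1.2 ∧
    Wirt k a (WallB n z) (dW n z a k).2.1 (dW n z a k).2.2 := by
  induction n with
  | zero =>
      constructor
      · exact (wirt_conj k 0 a).congr (by funext x; simp [WallAStar, WallP])
          (by simp [dW]) (by simp [dW])
      · exact (wirt_const k a 1).congr (by funext x; simp [WallB, WallP])
          (by simp [dW]) (by simp [dW])
  | succ n IH =>
      obtain ⟨hP, hQ⟩ := IH
      constructor
      · refine (((wirt_const k a z).mul hP).add ((wirt_conj k (n + 1) a).mul hQ)).congr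
          ?_ ?_ ?_
        · funext x; simp [WallAStar, WallB, WallP]
        · simp only [dW, ite_mul, one_mul, zero_mul, mul_zero, zero_add, add_zero]; try ring
        · simp only [dW, ite_mul, one_mul, zero_mul, mul_zero, zero_add, add_zero]; try ring
      · refine (hQ.add (((wirt_coord k (n + 1) a).mul (wirt_const k a z)).mul hP)).congr
          ?_ ?_ ?_
        · funext x; simp [WallAStar, WallB, WallP]
        · simp only [dW, ite_mul, one_mul, zero_mul, mul_zero, zero_add, add_zero]; try ring
        · simp only [dW, ite_mul, one_mul, zero_mul, mul_zero, zero_add, add_zero]; try ring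

/-! ### The Poisson bracket as a finite sum -/

lemma pb_wall (n : ℕ) (z w : ℂ) (a : ℕ → ℂ) :
    pb (WallAStar n z) (WallB n w) a
      = Complex.I * ∑ k ∈ Finset.range (n + 1), (1 - (Complex.normSq (a k) : ℂ)) *
          ((dW n z a k).1.2 * (dW n w a k).2.1 - (dW n z a k).1.1 * (dW n w a k).2.2) := by
  unfold pb
  congr 1
  rw [tsum_congr (fun k => by
    rw [(wall_wirt z a n k).1.dAlphaBar_eq, (wall_wirt z a n k).1.dAlpha_eq,
        (wall_wirt w a n k).2.dAlpha_eq, (wall_wirt w a n k).2.dAlphaBar_eq])]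
  exact tsum_eq_sum (fun k hk => by
    have hnk : n < k := by simpa using hk
    rw [dW_vanish n z a k hnk, dW_vanish n w a k hnk]; simp)

/-! ### The key induction -/

lemma key (a : ℕ → ℂ) (n : ℕ) : ∀ z w : ℂ, z ≠ w →
    (∑ k ∈ Finset.range (n + 1), (1 - (Complex.normSq (a k) : ℂ)) *
        ((dW n z a k).1.2 * (dW n w a k).1.1 - (dW n z a k).1.1 * (dW n w a k).1.2) = 0)
  ∧ (∑ k ∈ Finset.range (n + 1), (1 - (Complex.normSq (a k) : ℂ)) *
        ((dW n z a k).2.2 * (dW n w a k).2.1 - (dW n z a k).2.1 * (dW n w a k).2.2) = 0)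
  ∧ (∑ k ∈ Finset.range (n + 1), (1 - (Complex.normSq (a k) : ℂ)) *
        ((dW n z a k).1.2 * (dW n w a k).2.1 - (dW n z a k).1.1 * (dW n w a k).2.2)
      = w * (WallAStar n z a * WallB n w a - WallAStar n w a * WallB n z a) / (z - w)) := by
  induction n with
  | zero =>
      intro z w hzw
      refine ⟨?_, ?_, ?_⟩ <;> simp [dW, WallAStar, WallB, WallP]
  | succ n IH =>
      intro z w hzw
      have hzw' : (z - w) ≠ 0 := sub_ne_zero.mpr hzw
      have hwz' : (w - z) ≠ 0 := sub_ne_zero.mpr (Ne.symm hzw)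
      obtain ⟨hS, hU, hT⟩ := IH z w hzw
      obtain ⟨hS', hU', hT'⟩ := IH w z (Ne.symm hzw)
      have hv1 := dW_vanish n z a (n + 1) n.lt_succ_self
      have hv2 := dW_vanish n w a (n + 1) n.lt_succ_self
      refine ⟨?_, ?_, ?_⟩
      · -- S goal
        rw [Finset.sum_range_succ]
        rw [Finset.sum_congr rfl (fun k hk => by
          have hkn : k ≠ n + 1 := by have := Finset.mem_range.1 hk; omega
          show (1 - (Complex.normSq (a k) : ℂ)) *
              ((dW (n+1) z a k).1.2 * (dW (n+1) w a k).1.1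
                - (dW (n+1) z a k).1.1 * (dW (n+1) w a k).1.2)
            = (z * w) * ((1 - (Complex.normSq (a k) : ℂ)) *
                  ((dW n z a k).1.2 * (dW n w a k).1.1 - (dW n z a k).1.1 * (dW n w a k).1.2))
              + (z * (starRingEnd ℂ) (a (n+1))) * ((1 - (Complex.normSq (a k) : ℂ)) *
                  ((dW n z a k).1.2 * (dW n w a k).2.1 - (dW n z a k).1.1 * (dW n w a k).2.2))
              + ((starRingEnd ℂ) (a (n+1)) * (starRingEnd ℂ) (a (n+1))) *
                  ((1 - (Complex.normSq (a k) : ℂ)) *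
                  ((dW n z a k).2.2 * (dW n w a k).2.1 - (dW n z a k).2.1 * (dW n w a k).2.2))
              - ((starRingEnd ℂ) (a (n+1)) * w) * ((1 - (Complex.normSq (a k) : ℂ)) *
                  ((dW n w a k).1.2 * (dW n z a k).2.1 - (dW n w a k).1.1 * (dW n z a k).2.2))
          simp only [dW, if_neg hkn, add_zero]
          ring)]
        simp only [Finset.sum_sub_distrib, Finset.sum_add_distrib, ← Finset.mul_sum]
        rw [hS, hT, hU, hT']
        simp only [dW, if_pos rfl, hv1, hv2]
        field_simp
        ring
      · -- U goal
        rw [Finset.sum_range_succ]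
        rw [Finset.sum_congr rfl (fun k hk => by
          have hkn : k ≠ n + 1 := by have := Finset.mem_range.1 hk; omega
          show (1 - (Complex.normSq (a k) : ℂ)) *
              ((dW (n+1) z a k).2.2 * (dW (n+1) w a k).2.1
                - (dW (n+1) z a k).2.1 * (dW (n+1) w a k).2.2)
            = (1 : ℂ) * ((1 - (Complex.normSq (a k) : ℂ)) *
                  ((dW n z a k).2.2 * (dW n w a k).2.1 - (dW n z a k).2.1 * (dW n w a k).2.2))
              + (a (n+1) * z) * ((1 - (Complex.normSq (a k) : ℂ)) *
                  ((dW n z a k).1.2 * (dW n w a k).2.1 - (dW n z a k).1.1 * (dW n w a k).2.2))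
              + (a (n+1) * a (n+1) * z * w) * ((1 - (Complex.normSq (a k) : ℂ)) *
                  ((dW n z a k).1.2 * (dW n w a k).1.1 - (dW n z a k).1.1 * (dW n w a k).1.2))
              - (a (n+1) * w) * ((1 - (Complex.normSq (a k) : ℂ)) *
                  ((dW n w a k).1.2 * (dW n z a k).2.1 - (dW n w a k).1.1 * (dW n z a k).2.2))
          simp only [dW, if_neg hkn, add_zero]
          ring)]
        simp only [Finset.sum_sub_distrib, Finset.sum_add_distrib, ← Finset.mul_sum]
        rw [hS, hT, hU, hT']
        simp only [dW, if_pos rfl, hv1, hv2]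
        field_simp
        ring
      · -- T goal
        rw [Finset.sum_range_succ]
        rw [Finset.sum_congr rfl (fun k hk => by
          have hkn : k ≠ n + 1 := by have := Finset.mem_range.1 hk; omega
          show (1 - (Complex.normSq (a k) : ℂ)) *
              ((dW (n+1) z a k).1.2 * (dW (n+1) w a k).2.1
                - (dW (n+1) z a k).1.1 * (dW (n+1) w a k).2.2)
            = (a (n+1) * z * w) *
                  ((1 - (Complex.normSq (a k) : ℂ)) *
                  ((dW n z a k).1.2 * (dW n w a k).1.1 - (dW n z a k).1.1 * (dW n w a k).1.2))
              + z * ((1 - (Complex.normSq (a k) : ℂ)) *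
                  ((dW n z a k).1.2 * (dW n w a k).2.1 - (dW n z a k).1.1 * (dW n w a k).2.2))
              + (starRingEnd ℂ) (a (n+1)) * ((1 - (Complex.normSq (a k) : ℂ)) *
                  ((dW n z a k).2.2 * (dW n w a k).2.1 - (dW n z a k).2.1 * (dW n w a k).2.2))
              - ((starRingEnd ℂ) (a (n+1)) * a (n+1) * w) *
                  ((1 - (Complex.normSq (a k) : ℂ)) *
                  ((dW n w a k).1.2 * (dW n z a k).2.1 - (dW n w a k).1.1 * (dW n z a k).2.2))
          simp only [dW, if_neg hkn, add_zero]
          ring)]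
        simp only [Finset.sum_sub_distrib, Finset.sum_add_distrib, ← Finset.mul_sum]
        rw [hS, hT, hU, hT']
        simp only [dW, if_pos rfl, hv1, hv2, if_true]
        show _ = w * (WallAStar (n+1) z a * WallB (n+1) w a
            - WallAStar (n+1) w a * WallB (n+1) z a) / (z - w)
        simp only [WallAStar, WallB, WallP, Complex.normSq_eq_conj_mul_self]
        field_simp
        ring

theorem wall_F_identity (n : ℕ) (q : ℤ) (z w : ℂ) (hz : z ≠ 0) (hw : w ≠ 0) (hzw : z ≠ w)
    (a : ℕ → ℂ) (ha : ∀ k, ‖a k‖ < 1) :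
    z ^ q * (-Complex.I * pb (WallAStar n z) (WallB n w) a)
      - w ^ q * (-Complex.I * pb (WallAStar n w) (WallB n z) a)
    = Qpow q z w * (WallAStar n z a * WallB n w a - WallAStar n w a * WallB n z a) := by
  have hzw' : (z - w) ≠ 0 := sub_ne_zero.mpr hzw
  have hT := (key a n z w hzw).2.2
  have hT' := (key a n w z (Ne.symm hzw)).2.2
  rw [pb_wall n z w a, pb_wall n w z a, hT, hT']
  have hzq : z ^ q = z ^ (q - 1) * z := by
    rw [← zpow_add_one₀ hz (q - 1)]; norm_num
  have hwq : w ^ q = w ^ (q - 1) * w := by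
    rw [← zpow_add_one₀ hw (q - 1)]; norm_num
  have hwz' : (w - z) ≠ 0 := sub_ne_zero.mpr (Ne.symm hzw)
  have hcan : ∀ X : ℂ, -Complex.I * (Complex.I * X) = X := fun X => by
    rw [← mul_assoc, neg_mul, Complex.I_mul_I, neg_neg, one_mul]
  rw [hcan, hcan, hzq, hwq]
  unfold Qpow
  field_simp
  ring
end

section
/- For every n ≥ 0, every q ∈ ℤ, and all nonzero z, w ∈ ℂ with z ≠ w, setting S_n(z,w) = i·{A_n(z), A_n^*(w)}, one has z^q·S_n(z,w) − w^q·S_n(w,z) = −(z^q·A_n(z)·A_n^*(w) − w^q·A_n(w)·A_n^*(z)) + ((z^q − w^q)/(z − w))·(z·B_n^*(z)·B_n(w) − w·B_n^*(w)·B_n(z)). -/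
open Complex

namespace WallAux

abbrev Q := (ℂ × ℂ) × ℂ × ℂ

/-- One step of the Wall recursion with independent `α`, `β` slots. -/
noncomputable def Lstep (α β z : ℂ) (p : Q) : Q :=
  ((p.1.1 + α * z * p.2.2, p.1.2 + α * z * p.2.1),
   z * p.2.1 + β * p.1.2, z * p.2.2 + β * p.1.1)

lemma wallP_succ (n : ℕ) (z : ℂ) (a : ℕ → ℂ) :
    WallP (n + 1) z a
      = Lstep (a (n + 1)) ((starRingEnd ℂ) (a (n + 1))) z (WallP n z a) := rfl

/-- ∂/∂α_k of the Wall quadruple. -/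
noncomputable def DWa (k : ℕ) : ℕ → ℂ → (ℕ → ℂ) → Q
  | 0, _, _ => if k = 0 then ((1, 0), 0, 0) else 0
  | n + 1, z, a =>
      if k = n + 1 then ((z * (WallP n z a).2.2, z * (WallP n z a).2.1), 0, 0)
      else Lstep (a (n + 1)) ((starRingEnd ℂ) (a (n + 1))) z (DWa k n z a)

/-- ∂/∂conj(α_k) of the Wall quadruple. -/
noncomputable def DWb (k : ℕ) : ℕ → ℂ → (ℕ → ℂ) → Q
  | 0, _, _ => if k = 0 then ((0, 0), 1, 0) else 0
  | n + 1, z, a =>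
      if k = n + 1 then ((0, 0), (WallP n z a).1.2, (WallP n z a).1.1)
      else Lstep (a (n + 1)) ((starRingEnd ℂ) (a (n + 1))) z (DWb k n z a)

lemma DWa_zero (k : ℕ) (z : ℂ) (a : ℕ → ℂ) :
    DWa k 0 z a = if k = 0 then ((1, 0), 0, 0) else 0 := rfl

lemma DWa_succ (k n : ℕ) (z : ℂ) (a : ℕ → ℂ) :
    DWa k (n + 1) z a
      = if k = n + 1 then ((z * (WallP n z a).2.2, z * (WallP n z a).2.1), 0, 0)
        else Lstep (a (n + 1)) ((starRingEnd ℂ) (a (n + 1))) z (DWa k n z a) := rfl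

lemma DWb_zero (k : ℕ) (z : ℂ) (a : ℕ → ℂ) :
    DWb k 0 z a = if k = 0 then ((0, 0), 1, 0) else 0 := rfl

lemma DWb_succ (k n : ℕ) (z : ℂ) (a : ℕ → ℂ) :
    DWb k (n + 1) z a
      = if k = n + 1 then ((0, 0), (WallP n z a).1.2, (WallP n z a).1.1)
        else Lstep (a (n + 1)) ((starRingEnd ℂ) (a (n + 1))) z (DWb k n z a) := rfl

lemma Lstep_zero (α β z : ℂ) : Lstep α β z 0 = 0 := by
  simp [Lstep, Prod.ext_iff]

lemma DWa_eq_zero {k n : ℕ} (h : n < k) (z : ℂ) (a : ℕ → ℂ) : DWa k n z a = 0 := by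
  induction n with
  | zero => rw [DWa_zero, if_neg (by omega)]
  | succ n ih => rw [DWa_succ, if_neg (by omega), ih (by omega), Lstep_zero]

lemma DWb_eq_zero {k n : ℕ} (h : n < k) (z : ℂ) (a : ℕ → ℂ) : DWb k n z a = 0 := by
  induction n with
  | zero => rw [DWb_zero, if_neg (by omega)]
  | succ n ih => rw [DWb_succ, if_neg (by omega), ih (by omega), Lstep_zero]

lemma wallP_update_of_gt {k n : ℕ} (h : n < k) (z : ℂ) (a : ℕ → ℂ) (x : ℂ) :
    WallP n z (Function.update a k x) = WallP n z a := by
  induction n with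
  | zero =>
    show ((Function.update a k x 0, 1), _, 1) = _
    rw [Function.update_of_ne (by omega)]
    rfl
  | succ n ih =>
    rw [wallP_succ n z (Function.update a k x), wallP_succ n z a, ih (by omega),
      Function.update_of_ne (by omega)]

/-- Affine combination of quadruples, componentwise `p + s*q + t*r`. -/
noncomputable def aff (p q r : Q) (s t : ℂ) : Q :=
  ((p.1.1 + s * q.1.1 + t * r.1.1, p.1.2 + s * q.1.2 + t * r.1.2),
   p.2.1 + s * q.2.1 + t * r.2.1, p.2.2 + s * q.2.2 + t * r.2.2)

/-- The Wall quadruple is affine in each variable `α_k`, `conj α_k`. -/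
lemma wallP_update (k n : ℕ) (z : ℂ) (a : ℕ → ℂ) (x : ℂ) :
    WallP n z (Function.update a k x)
      = aff (WallP n z a) (DWa k n z a) (DWb k n z a)
          (x - a k) ((starRingEnd ℂ) x - (starRingEnd ℂ) (a k)) := by
  induction n with
  | zero =>
    rcases eq_or_ne k 0 with rfl | hk
    · show ((Function.update a 0 x 0, 1), (starRingEnd ℂ) (Function.update a 0 x 0), 1) = _
      rw [Function.update_self, DWa_zero, DWb_zero, if_pos rfl, if_pos rfl]
      simp only [aff, Prod.mk.injEq]
      refine ⟨⟨by show x = a 0 + (x - a 0) * 1 + _ * 0; ring, by show (1:ℂ) = 1 + _ * 0 + _ * 0; ring⟩,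
        by show (starRingEnd ℂ) x = (starRingEnd ℂ) (a 0) + _ * 0 + _ * 1; ring,
        by show (1:ℂ) = 1 + _ * 0 + _ * 0; ring⟩
    · rw [wallP_update_of_gt (by omega) z a x, DWa_zero, DWb_zero, if_neg hk, if_neg hk]
      simp [aff, Prod.ext_iff]
  | succ n ih =>
    rcases eq_or_ne k (n + 1) with rfl | hk
    · rw [wallP_succ n z (Function.update a (n+1) x), wallP_update_of_gt (by omega) z a x,
        Function.update_self, wallP_succ n z a, DWa_succ, DWb_succ, if_pos rfl, if_pos rfl]
      simp only [Lstep, aff, Prod.mk.injEq]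
      refine ⟨⟨by ring, by ring⟩, by ring, by ring⟩
    · rw [wallP_succ n z (Function.update a k x), Function.update_of_ne (Ne.symm hk), ih,
        wallP_succ n z a, DWa_succ, DWb_succ, if_neg hk, if_neg hk]
      simp only [Lstep, aff, Prod.mk.injEq]
      refine ⟨⟨by ring, by ring⟩, by ring, by ring⟩

lemma deriv_linear (C c d : ℂ) :
    deriv (fun t : ℝ => C + (t : ℂ) * c + (t : ℂ) * d) 0 = c + d := by
  have h1 : HasDerivAt (fun t : ℝ => (t : ℂ)) 1 0 := by
    simpa using (hasDerivAt_id (0 : ℝ)).ofReal_comp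
  have h := ((h1.mul_const c).const_add C).add (h1.mul_const d)
  exact h.deriv.trans (by ring)

lemma deriv_wall (π : Q → ℂ)
    (hπ : ∀ p q r s t, π (aff p q r s t) = π p + s * π q + t * π r)
    (k n : ℕ) (z : ℂ) (a : ℕ → ℂ) :
    dAlpha k (fun b => π (WallP n z b)) a = π (DWa k n z a)
      ∧ dAlphaBar k (fun b => π (WallP n z b)) a = π (DWb k n z a) := by
  have hu : duDeriv k (fun b => π (WallP n z b)) a
      = π (DWa k n z a) + π (DWb k n z a) := by
    unfold duDeriv
    have heq : (fun t : ℝ => π (WallP n z (Function.update a k (a k + (t : ℂ)))))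
        = fun t : ℝ => π (WallP n z a) + (t : ℂ) * π (DWa k n z a)
            + (t : ℂ) * π (DWb k n z a) := by
      funext t
      rw [wallP_update, hπ]
      simp [Complex.conj_ofReal]
    rw [heq, deriv_linear]
  have hv : dvDeriv k (fun b => π (WallP n z b)) a
      = Complex.I * π (DWa k n z a) - Complex.I * π (DWb k n z a) := by
    unfold dvDeriv
    have heq : (fun t : ℝ => π (WallP n z (Function.update a k (a k + (t : ℂ) * Complex.I))))
        = fun t : ℝ => π (WallP n z a) + (t : ℂ) * (Complex.I * π (DWa k n z a))
            + (t : ℂ) * (-(Complex.I * π (DWb k n z a))) := by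
      funext t
      rw [wallP_update, hπ]
      simp [Complex.conj_ofReal]
      ring
    rw [heq, deriv_linear]
    ring
  constructor
  · show (1 / 2) * (duDeriv k (fun b => π (WallP n z b)) a
        - Complex.I * dvDeriv k (fun b => π (WallP n z b)) a) = _
    rw [hu, hv]
    linear_combination (-(1/2) * (π (DWa k n z a) - π (DWb k n z a))) * Complex.I_mul_I
  · show (1 / 2) * (duDeriv k (fun b => π (WallP n z b)) a
        + Complex.I * dvDeriv k (fun b => π (WallP n z b)) a) = _
    rw [hu, hv]
    linear_combination ((1/2) * (π (DWa k n z a) - π (DWb k n z a))) * Complex.I_mul_I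

lemma aff_11 : ∀ (p q r : Q) (s t : ℂ), (aff p q r s t).1.1 = p.1.1 + s * q.1.1 + t * r.1.1 :=
  fun _ _ _ _ _ => rfl
lemma aff_12 : ∀ (p q r : Q) (s t : ℂ), (aff p q r s t).1.2 = p.1.2 + s * q.1.2 + t * r.1.2 :=
  fun _ _ _ _ _ => rfl
lemma aff_21 : ∀ (p q r : Q) (s t : ℂ), (aff p q r s t).2.1 = p.2.1 + s * q.2.1 + t * r.2.1 :=
  fun _ _ _ _ _ => rfl
lemma aff_22 : ∀ (p q r : Q) (s t : ℂ), (aff p q r s t).2.2 = p.2.2 + s * q.2.2 + t * r.2.2 :=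
  fun _ _ _ _ _ => rfl

noncomputable def rho (a : ℕ → ℂ) (k : ℕ) : ℂ := 1 - (Complex.normSq (a k) : ℂ)

lemma rho_eq (a : ℕ → ℂ) (k : ℕ) : rho a k = 1 - a k * (starRingEnd ℂ) (a k) := by
  unfold rho
  rw [Complex.mul_conj]

noncomputable def brAA (n : ℕ) (z w : ℂ) (a : ℕ → ℂ) : ℂ :=
  ∑ k ∈ Finset.range (n + 1), rho a k *
    ((DWb k n z a).1.1 * (DWa k n w a).2.1 - (DWa k n z a).1.1 * (DWb k n w a).2.1)

noncomputable def brAB (n : ℕ) (z w : ℂ) (a : ℕ → ℂ) : ℂ :=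
  ∑ k ∈ Finset.range (n + 1), rho a k *
    ((DWb k n z a).1.1 * (DWa k n w a).1.2 - (DWa k n z a).1.1 * (DWb k n w a).1.2)

noncomputable def brBA (n : ℕ) (z w : ℂ) (a : ℕ → ℂ) : ℂ :=
  ∑ k ∈ Finset.range (n + 1), rho a k *
    ((DWb k n z a).2.2 * (DWa k n w a).2.1 - (DWa k n z a).2.2 * (DWb k n w a).2.1)

noncomputable def brBB (n : ℕ) (z w : ℂ) (a : ℕ → ℂ) : ℂ :=
  ∑ k ∈ Finset.range (n + 1), rho a k *
    ((DWb k n z a).2.2 * (DWa k n w a).1.2 - (DWa k n z a).2.2 * (DWb k n w a).1.2)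

lemma I_pb_eq (n : ℕ) (z w : ℂ) (a : ℕ → ℂ) :
    Complex.I * pb (WallA n z) (WallAStar n w) a = -brAA n z w a := by
  unfold pb brAA
  have hterm : ∀ k : ℕ, (1 - (Complex.normSq (a k) : ℂ)) *
      (dAlphaBar k (WallA n z) a * dAlpha k (WallAStar n w) a
        - dAlpha k (WallA n z) a * dAlphaBar k (WallAStar n w) a)
      = rho a k * ((DWb k n z a).1.1 * (DWa k n w a).2.1
          - (DWa k n z a).1.1 * (DWb k n w a).2.1) := by
    intro k
    have h1 := deriv_wall (fun p => p.1.1) (fun _ _ _ _ _ => rfl) k n z a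
    have h2 := deriv_wall (fun p => p.2.1) (fun _ _ _ _ _ => rfl) k n w a
    rw [show dAlphaBar k (WallA n z) a = dAlphaBar k (fun b => (WallP n z b).1.1) a from rfl,
      show dAlpha k (WallA n z) a = dAlpha k (fun b => (WallP n z b).1.1) a from rfl,
      show dAlphaBar k (WallAStar n w) a = dAlphaBar k (fun b => (WallP n w b).2.1) a from rfl,
      show dAlpha k (WallAStar n w) a = dAlpha k (fun b => (WallP n w b).2.1) a from rfl,
      h1.1, h1.2, h2.1, h2.2, rho]
  rw [tsum_congr hterm, tsum_eq_sum (s := Finset.range (n + 1)) ?_, ← mul_assoc,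
    Complex.I_mul_I, neg_one_mul]
  intro k hk
  have hk' : n < k := by simpa using Nat.lt_of_succ_le (by simpa [Finset.mem_range] using hk)
  rw [DWa_eq_zero hk', DWb_eq_zero hk', DWa_eq_zero hk', DWb_eq_zero hk']
  simp

lemma brAA_succ (n : ℕ) (z w : ℂ) (a : ℕ → ℂ) :
    brAA (n + 1) z w a
      = w * brAA n z w a + (starRingEnd ℂ) (a (n + 1)) * brAB n z w a
        + a (n + 1) * z * w * brBA n z w a
        + a (n + 1) * z * (starRingEnd ℂ) (a (n + 1)) * brBB n z w a
        - rho a (n + 1) * (z * (WallP n z a).2.2 * (WallP n w a).1.2) := by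
  unfold brAA brAB brBA brBB
  rw [Finset.sum_range_succ]
  have hsum : ∀ k ∈ Finset.range (n + 1), rho a k *
      ((DWb k (n+1) z a).1.1 * (DWa k (n+1) w a).2.1
        - (DWa k (n+1) z a).1.1 * (DWb k (n+1) w a).2.1)
      = w * (rho a k * ((DWb k n z a).1.1 * (DWa k n w a).2.1
            - (DWa k n z a).1.1 * (DWb k n w a).2.1))
        + (starRingEnd ℂ) (a (n + 1)) * (rho a k * ((DWb k n z a).1.1 * (DWa k n w a).1.2
            - (DWa k n z a).1.1 * (DWb k n w a).1.2))
        + a (n + 1) * z * w * (rho a k * ((DWb k n z a).2.2 * (DWa k n w a).2.1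
            - (DWa k n z a).2.2 * (DWb k n w a).2.1))
        + a (n + 1) * z * (starRingEnd ℂ) (a (n + 1)) *
            (rho a k * ((DWb k n z a).2.2 * (DWa k n w a).1.2
            - (DWa k n z a).2.2 * (DWb k n w a).1.2)) := by
    intro k hk
    have hkne : k ≠ n + 1 := by simp only [Finset.mem_range] at hk; omega
    rw [DWa_succ, DWb_succ, DWa_succ, DWb_succ, if_neg hkne, if_neg hkne, if_neg hkne,
      if_neg hkne]
    simp only [Lstep]
    ring
  rw [Finset.sum_congr rfl hsum, Finset.sum_add_distrib, Finset.sum_add_distrib,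
    Finset.sum_add_distrib, DWa_succ, DWb_succ, DWa_succ, DWb_succ, if_pos rfl, if_pos rfl,
    if_pos rfl, if_pos rfl]
  simp only [Finset.mul_sum]
  ring

lemma brAB_succ (n : ℕ) (z w : ℂ) (a : ℕ → ℂ) :
    brAB (n + 1) z w a
      = brAB n z w a + a (n + 1) * w * brAA n z w a + a (n + 1) * z * brBB n z w a
        + a (n + 1) * a (n + 1) * z * w * brBA n z w a := by
  unfold brAA brAB brBA brBB
  rw [Finset.sum_range_succ]
  have hsum : ∀ k ∈ Finset.range (n + 1), rho a k *
      ((DWb k (n+1) z a).1.1 * (DWa k (n+1) w a).1.2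
        - (DWa k (n+1) z a).1.1 * (DWb k (n+1) w a).1.2)
      = rho a k * ((DWb k n z a).1.1 * (DWa k n w a).1.2
            - (DWa k n z a).1.1 * (DWb k n w a).1.2)
        + a (n + 1) * w * (rho a k * ((DWb k n z a).1.1 * (DWa k n w a).2.1
            - (DWa k n z a).1.1 * (DWb k n w a).2.1))
        + a (n + 1) * z * (rho a k * ((DWb k n z a).2.2 * (DWa k n w a).1.2
            - (DWa k n z a).2.2 * (DWb k n w a).1.2))
        + a (n + 1) * a (n + 1) * z * w *
            (rho a k * ((DWb k n z a).2.2 * (DWa k n w a).2.1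
            - (DWa k n z a).2.2 * (DWb k n w a).2.1)) := by
    intro k hk
    have hkne : k ≠ n + 1 := by simp only [Finset.mem_range] at hk; omega
    rw [DWa_succ, DWb_succ, DWa_succ, DWb_succ, if_neg hkne, if_neg hkne, if_neg hkne,
      if_neg hkne]
    simp only [Lstep]
    ring
  rw [Finset.sum_congr rfl hsum, Finset.sum_add_distrib, Finset.sum_add_distrib,
    Finset.sum_add_distrib, DWa_succ, DWb_succ, DWa_succ, DWb_succ, if_pos rfl, if_pos rfl,
    if_pos rfl, if_pos rfl]
  simp only [Finset.mul_sum]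
  ring

lemma brBA_succ (n : ℕ) (z w : ℂ) (a : ℕ → ℂ) :
    brBA (n + 1) z w a
      = z * w * brBA n z w a + z * (starRingEnd ℂ) (a (n + 1)) * brBB n z w a
        + (starRingEnd ℂ) (a (n + 1)) * w * brAA n z w a
        + (starRingEnd ℂ) (a (n + 1)) * (starRingEnd ℂ) (a (n + 1)) * brAB n z w a := by
  unfold brAA brAB brBA brBB
  rw [Finset.sum_range_succ]
  have hsum : ∀ k ∈ Finset.range (n + 1), rho a k *
      ((DWb k (n+1) z a).2.2 * (DWa k (n+1) w a).2.1
        - (DWa k (n+1) z a).2.2 * (DWb k (n+1) w a).2.1)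
      = z * w * (rho a k * ((DWb k n z a).2.2 * (DWa k n w a).2.1
            - (DWa k n z a).2.2 * (DWb k n w a).2.1))
        + z * (starRingEnd ℂ) (a (n + 1)) * (rho a k * ((DWb k n z a).2.2 * (DWa k n w a).1.2
            - (DWa k n z a).2.2 * (DWb k n w a).1.2))
        + (starRingEnd ℂ) (a (n + 1)) * w * (rho a k * ((DWb k n z a).1.1 * (DWa k n w a).2.1
            - (DWa k n z a).1.1 * (DWb k n w a).2.1))
        + (starRingEnd ℂ) (a (n + 1)) * (starRingEnd ℂ) (a (n + 1)) *
            (rho a k * ((DWb k n z a).1.1 * (DWa k n w a).1.2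
            - (DWa k n z a).1.1 * (DWb k n w a).1.2)) := by
    intro k hk
    have hkne : k ≠ n + 1 := by simp only [Finset.mem_range] at hk; omega
    rw [DWa_succ, DWb_succ, DWa_succ, DWb_succ, if_neg hkne, if_neg hkne, if_neg hkne,
      if_neg hkne]
    simp only [Lstep]
    ring
  rw [Finset.sum_congr rfl hsum, Finset.sum_add_distrib, Finset.sum_add_distrib,
    Finset.sum_add_distrib, DWa_succ, DWb_succ, DWa_succ, DWb_succ, if_pos rfl, if_pos rfl,
    if_pos rfl, if_pos rfl]
  simp only [Finset.mul_sum]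
  ring

lemma brBB_succ (n : ℕ) (z w : ℂ) (a : ℕ → ℂ) :
    brBB (n + 1) z w a
      = z * brBB n z w a + a (n + 1) * z * w * brBA n z w a
        + (starRingEnd ℂ) (a (n + 1)) * brAB n z w a
        + a (n + 1) * (starRingEnd ℂ) (a (n + 1)) * w * brAA n z w a
        + rho a (n + 1) * (w * (WallP n z a).1.1 * (WallP n w a).2.1) := by
  unfold brAA brAB brBA brBB
  rw [Finset.sum_range_succ]
  have hsum : ∀ k ∈ Finset.range (n + 1), rho a k *
      ((DWb k (n+1) z a).2.2 * (DWa k (n+1) w a).1.2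
        - (DWa k (n+1) z a).2.2 * (DWb k (n+1) w a).1.2)
      = z * (rho a k * ((DWb k n z a).2.2 * (DWa k n w a).1.2
            - (DWa k n z a).2.2 * (DWb k n w a).1.2))
        + a (n + 1) * z * w * (rho a k * ((DWb k n z a).2.2 * (DWa k n w a).2.1
            - (DWa k n z a).2.2 * (DWb k n w a).2.1))
        + (starRingEnd ℂ) (a (n + 1)) * (rho a k * ((DWb k n z a).1.1 * (DWa k n w a).1.2
            - (DWa k n z a).1.1 * (DWb k n w a).1.2))
        + a (n + 1) * (starRingEnd ℂ) (a (n + 1)) * w *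
            (rho a k * ((DWb k n z a).1.1 * (DWa k n w a).2.1
            - (DWa k n z a).1.1 * (DWb k n w a).2.1)) := by
    intro k hk
    have hkne : k ≠ n + 1 := by simp only [Finset.mem_range] at hk; omega
    rw [DWa_succ, DWb_succ, DWa_succ, DWb_succ, if_neg hkne, if_neg hkne, if_neg hkne,
      if_neg hkne]
    simp only [Lstep]
    ring
  rw [Finset.sum_congr rfl hsum, Finset.sum_add_distrib, Finset.sum_add_distrib,
    Finset.sum_add_distrib, DWa_succ, DWb_succ, DWa_succ, DWb_succ, if_pos rfl, if_pos rfl,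
    if_pos rfl, if_pos rfl]
  simp only [Finset.mul_sum]
  ring

/-- The key closed forms for the four bracket sums, proved simultaneously by induction. -/
lemma br_key (n : ℕ) (z w : ℂ) (a : ℕ → ℂ) :
    (z - w) * brAA n z w a
        = (z - w) * ((WallP n z a).1.1 * (WallP n w a).2.1)
          - z * (WallP n z a).2.2 * (WallP n w a).1.2
          + w * (WallP n w a).2.2 * (WallP n z a).1.2
      ∧ (z - w) * brAB n z w a
        = -(w * ((WallP n z a).1.1 * (WallP n w a).1.2
            - (WallP n w a).1.1 * (WallP n z a).1.2))
      ∧ (z - w) * brBA n z w a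
        = -(w * ((WallP n z a).2.2 * (WallP n w a).2.1
            - (WallP n w a).2.2 * (WallP n z a).2.1))
      ∧ (z - w) * brBB n z w a
        = -(w * ((WallP n z a).1.1 * (WallP n w a).2.1
            - (WallP n w a).1.1 * (WallP n z a).2.1)) := by
  induction n with
  | zero =>
    unfold brAA brAB brBA brBB
    refine ⟨?_, ?_, ?_, ?_⟩ <;>
        simp [Finset.sum_range_one, DWa_zero, DWb_zero, rho_eq, WallP] <;> ring
  | succ n ih =>
    obtain ⟨h1, h2, h3, h4⟩ := ih
    rw [wallP_succ n z a, wallP_succ n w a]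
    refine ⟨?_, ?_, ?_, ?_⟩
    · rw [brAA_succ, rho_eq]
      simp only [Lstep]
      linear_combination w * h1 + (starRingEnd ℂ) (a (n+1)) * h2
        + a (n+1) * z * w * h3 + a (n+1) * z * (starRingEnd ℂ) (a (n+1)) * h4
    · rw [brAB_succ]
      simp only [Lstep]
      linear_combination h2 + a (n+1) * w * h1 + a (n+1) * z * h4
        + a (n+1) * a (n+1) * z * w * h3
    · rw [brBA_succ]
      simp only [Lstep]
      linear_combination z * w * h3 + z * (starRingEnd ℂ) (a (n+1)) * h4
        + (starRingEnd ℂ) (a (n+1)) * w * h1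
        + (starRingEnd ℂ) (a (n+1)) * (starRingEnd ℂ) (a (n+1)) * h2
    · rw [brBB_succ, rho_eq]
      simp only [Lstep]
      linear_combination z * h4 + a (n+1) * z * w * h3 + (starRingEnd ℂ) (a (n+1)) * h2
        + a (n+1) * (starRingEnd ℂ) (a (n+1)) * w * h1

end WallAux

open WallAux in
theorem wall_S_identity (n : ℕ) (q : ℤ) (z w : ℂ) (hz : z ≠ 0) (hw : w ≠ 0) (hzw : z ≠ w)
    (a : ℕ → ℂ) (ha : ∀ k, ‖a k‖ < 1) :
    z ^ q * (Complex.I * pb (WallA n z) (WallAStar n w) a)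
      - w ^ q * (Complex.I * pb (WallA n w) (WallAStar n z) a)
    = -(z ^ q * WallA n z a * WallAStar n w a - w ^ q * WallA n w a * WallAStar n z a)
      + (z ^ q - w ^ q) / (z - w)
          * (z * WallBStar n z a * WallB n w a - w * WallBStar n w a * WallB n z a) := by
  have h1 := (br_key n z w a).1
  have h2 := (br_key n w z a).1
  have hpz := I_pb_eq n z w a
  have hpw := I_pb_eq n w z a
  have hzw' : z - w ≠ 0 := sub_ne_zero.mpr hzw
  rw [hpz, hpw]
  simp only [WallA, WallAStar, WallB, WallBStar]
  apply mul_left_cancel₀ hzw'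
  have hdiv : (z - w) * ((z ^ q - w ^ q) / (z - w)) = z ^ q - w ^ q := by
    field_simp
  linear_combination (-(z ^ q)) * h1 + (-(w ^ q)) * h2
    + (-(z * (WallP n z a).2.2 * (WallP n w a).1.2
        - w * (WallP n w a).2.2 * (WallP n z a).1.2)) * hdiv
end
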